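/- Under the hypotheses of the kernel normalization lemma (K nonnegative continuous, K > 0 on B_{R₁}, K = 0 outside B_{R₂}), for any nonnegative f(x,v) with ρ(x) = ∫ f(x,v) dv, ρ̃(x) = (K ⋆ ρ)(x), and ũ(x) = (∫∫ K(x−y) v f(y,v) dv dy)/ρ̃(x), one has ∫_{ℝ^d} ρ(x) ũ(x)² dx ≤ C ∫∫ |v|² f(y,v) dv dy, where C is the constant from the kernel normalization lemma. -/

import Mathlib

/-!
Write `ρ̃ = K ⋆ ρ` and `J x = ∫∫ K (x - y) |v|² f (y, v)`. Cauchy–Schwarz for the weight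
`K (x - y) f (y, v)` gives `ρ̃ |ũ|² ≤ J` pointwise, hence `ρ ũ² ≤ (ρ / ρ̃) J`, and by Tonelli
`∫ (ρ / ρ̃) J = ∫∫ (∫ K (x - y) ρ x / ρ̃ x dx) |v|² f (y, v)`. The inner integral is bounded
uniformly in `y`: cover the support of `K` by finitely many balls of radius `R₁ / 2`; on such a
ball `B`, `ρ̃ ≥ κ ∫_B ρ` with `κ = min_{B_{R₁}} K > 0`, so `∫_B ρ / ρ̃ ≤ 1 / κ`.
-/

open MeasureTheory Metric

open scoped ENNReal

theorem lintegral_mul_lintegral_le_of_lintegral_kernel_le {α β : Type*} [MeasurableSpace α]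
    [MeasurableSpace β] {μ : Measure α} {ν : Measure β} [SFinite μ] [SFinite ν]
    {k : α → β → ℝ≥0∞} (hk : Measurable (Function.uncurry k)) {w : α → ℝ≥0∞} (hw : Measurable w)
    {F : β → ℝ≥0∞} (hF : Measurable F) {C : ℝ≥0∞} (hC : ∀ z, ∫⁻ x, k x z * w x ∂μ ≤ C) :
    ∫⁻ x, w x * ∫⁻ z, k x z * F z ∂ν ∂μ ≤ C * ∫⁻ z, F z ∂ν := by
  have hkF : ∀ x, Measurable fun z => k x z * F z := fun x =>
    (hk.comp (measurable_const.prodMk measurable_id)).mul hF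
  calc ∫⁻ x, w x * ∫⁻ z, k x z * F z ∂ν ∂μ
      = ∫⁻ z, ∫⁻ x, w x * (k x z * F z) ∂μ ∂ν := by
        simp_rw [← lintegral_const_mul _ (hkF _)]
        exact lintegral_lintegral_swap
          ((hw.comp measurable_fst).mul (hk.mul (hF.comp measurable_snd))).aemeasurable
    _ = ∫⁻ z, (∫⁻ x, k x z * w x ∂μ) * F z ∂ν := by
        refine lintegral_congr fun z => ?_
        have hkw : Measurable fun x => k x z * w x :=
          (hk.comp (measurable_id.prodMk measurable_const)).mul hw
        rw [← lintegral_mul_const _ hkw]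
        exact lintegral_congr fun x => by ring
    _ ≤ ∫⁻ z, C * F z ∂ν := lintegral_mono fun z => mul_le_mul_left (hC z) _
    _ = C * ∫⁻ z, F z ∂ν := lintegral_const_mul _ hF

theorem ofReal_integral_le_lintegral_ofReal {α : Type*} [MeasurableSpace α] {μ : Measure α}
    {f : α → ℝ} (hf : 0 ≤ f) : ENNReal.ofReal (∫ a, f a ∂μ) ≤ ∫⁻ a, ENNReal.ofReal (f a) ∂μ := by
  simpa only [Real.enorm_of_nonneg (integral_nonneg hf), Real.enorm_of_nonneg (hf _)]
    using enorm_integral_le_lintegral_enorm f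

theorem mul_norm_inv_smul_sq_le {V : Type*} [NormedAddCommGroup V] [NormedSpace ℝ V]
    {a b J : ℝ} {m : V} (ha : 0 ≤ a) (hb : 0 ≤ b) (hm : ‖m‖ ^ 2 ≤ b * J) :
    a * ‖b⁻¹ • m‖ ^ 2 ≤ a / b * J := by
  rcases hb.eq_or_lt with rfl | hb
  · simp
  rw [norm_smul, Real.norm_of_nonneg (inv_nonneg.2 hb.le), mul_pow, div_eq_mul_inv, mul_assoc]
  refine mul_le_mul_of_nonneg_left ?_ ha
  calc b⁻¹ ^ 2 * ‖m‖ ^ 2 ≤ b⁻¹ ^ 2 * (b * J) := by gcongr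
    _ = b⁻¹ * J := by field_simp

section CauchySchwarz

variable {α : Type*} [MeasurableSpace α] {μ : Measure α}

theorem sq_integral_mul_le_integral_mul_integral_mul_sq {g h : α → ℝ} (hg0 : 0 ≤ g) (hh0 : 0 ≤ h)
    (hg : Integrable g μ) (hh : AEStronglyMeasurable h μ)
    (hgh : Integrable (fun a => g a * h a ^ 2) μ) :
    (∫ a, g a * h a ∂μ) ^ 2 ≤ (∫ a, g a ∂μ) * ∫ a, g a * h a ^ 2 ∂μ := by
  have hsqrt : AEStronglyMeasurable (fun a => √(g a)) μ :=
    hg.aestronglyMeasurable.aemeasurable.sqrt.aestronglyMeasurable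
  have hmem₁ : MemLp (fun a => √(g a)) (ENNReal.ofReal 2) μ := by
    rw [ENNReal.ofReal_ofNat, memLp_two_iff_integrable_sq hsqrt]
    simpa [Real.sq_sqrt (hg0 _)] using hg
  have hmem₂ : MemLp (fun a => √(g a) * h a) (ENNReal.ofReal 2) μ := by
    rw [ENNReal.ofReal_ofNat,
      memLp_two_iff_integrable_sq (f := fun a => √(g a) * h a) (hsqrt.mul hh)]
    simpa [mul_pow, Real.sq_sqrt (hg0 _)] using hgh
  have holder := integral_mul_le_Lp_mul_Lq_of_nonneg Real.HolderConjugate.two_two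
    (Filter.Eventually.of_forall fun a => Real.sqrt_nonneg (g a))
    (Filter.Eventually.of_forall fun a => mul_nonneg (Real.sqrt_nonneg (g a)) (hh0 a)) hmem₁ hmem₂
  simp only [← mul_assoc, Real.mul_self_sqrt (hg0 _), Real.rpow_two, mul_pow,
    Real.sq_sqrt (hg0 _), ← Real.sqrt_eq_rpow] at holder
  calc (∫ a, g a * h a ∂μ) ^ 2
      ≤ (√(∫ a, g a ∂μ) * √(∫ a, g a * h a ^ 2 ∂μ)) ^ 2 :=
        pow_le_pow_left₀ (integral_nonneg fun a => mul_nonneg (hg0 a) (hh0 a)) holder 2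
    _ = (∫ a, g a ∂μ) * ∫ a, g a * h a ^ 2 ∂μ := by
        rw [mul_pow, Real.sq_sqrt (integral_nonneg hg0),
          Real.sq_sqrt (integral_nonneg fun a => mul_nonneg (hg0 a) (sq_nonneg _))]

theorem norm_integral_smul_sq_le {E : Type*} [NormedAddCommGroup E] [NormedSpace ℝ E]
    {g : α → ℝ} {v : α → E} (hg0 : 0 ≤ g) (hg : Integrable g μ) (hv : AEStronglyMeasurable v μ)
    (hgv : Integrable (fun a => g a * ‖v a‖ ^ 2) μ) :
    ‖∫ a, g a • v a ∂μ‖ ^ 2 ≤ (∫ a, g a ∂μ) * ∫ a, g a * ‖v a‖ ^ 2 ∂μ := by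
  have hnorm : ‖∫ a, g a • v a ∂μ‖ ≤ ∫ a, g a * ‖v a‖ ∂μ := by
    simpa only [norm_smul, Real.norm_of_nonneg (hg0 _)]
      using norm_integral_le_integral_norm (fun a => g a • v a) (μ := μ)
  exact (pow_le_pow_left₀ (norm_nonneg _) hnorm 2).trans
    (sq_integral_mul_le_integral_mul_integral_mul_sq hg0 (fun a => norm_nonneg (v a)) hg
      hv.norm hgv)

end CauchySchwarz

section Kernel

variable {E : Type*} [NormedAddCommGroup E] {K : E → ℝ} {M r κ : ℝ}

theorem exists_finset_ofReal_kernel_mul_le_sum_indicator (hKM : ∀ x, K x ≤ M)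
    (hKsupp : HasCompactSupport K) (hr : 0 < r) :
    ∃ s : Finset E, ∀ (g : E → ℝ≥0∞) (x y : E), ENNReal.ofReal (K (x - y)) * g x ≤
      ∑ c ∈ s, (ball (y + c) (r / 2)).indicator (fun x => ENNReal.ofReal M * g x) x := by
  obtain ⟨s, hs⟩ := hKsupp.isCompact.elim_finite_subcover (fun c => ball c (r / 2))
    (fun _ => isOpen_ball) fun x _ => Set.mem_iUnion.2 ⟨x, mem_ball_self (half_pos hr)⟩
  refine ⟨s, fun g x y => ?_⟩
  by_cases hK : K (x - y) = 0
  · simp [hK]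
  obtain ⟨c, hc, hxc⟩ := Set.mem_iUnion₂.1 (hs (subset_tsupport K hK))
  have hx : x ∈ ball (y + c) (r / 2) := by
    rwa [mem_ball, dist_eq_norm, ← sub_sub, ← dist_eq_norm]
  calc ENNReal.ofReal (K (x - y)) * g x ≤ ENNReal.ofReal M * g x :=
        mul_le_mul_left (ENNReal.ofReal_le_ofReal (hKM _)) _
    _ = (ball (y + c) (r / 2)).indicator (fun x => ENNReal.ofReal M * g x) x :=
        (Set.indicator_of_mem hx (fun x => ENNReal.ofReal M * g x)).symm
    _ ≤ _ := Finset.single_le_sum (f := fun c => (ball (y + c) (r / 2)).indicator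
        (fun x => ENNReal.ofReal M * g x) x) (fun _ _ => bot_le) hc

variable [MeasurableSpace E] [BorelSpace E]

theorem integrable_kernel_mul {β : Type*} [MeasurableSpace β] {ν : Measure β}
    (hKm : Measurable K) (hK0 : ∀ x, 0 ≤ K x) (hKM : ∀ x, K x ≤ M) {p : β → E} (hp : Measurable p)
    {g : β → ℝ} (hg : Integrable g ν) (x : E) :
    Integrable (fun z => K (x - p z) * g z) ν :=
  hg.bdd_mul (hKm.comp (hp.const_sub x)).aestronglyMeasurable
    (Filter.Eventually.of_forall fun z => by
      rw [Real.norm_of_nonneg (hK0 _)]; exact hKM _)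

theorem measurable_integral_kernel_mul [SecondCountableTopology E] {μ : Measure E} [SFinite μ]
    (hKm : Measurable K) {ρ : E → ℝ} (hρ : Measurable ρ) :
    Measurable fun x => ∫ y, K (x - y) * ρ y ∂μ :=
  ((hKm.comp measurable_sub).mul
    (hρ.comp measurable_snd)).stronglyMeasurable.integral_prod_right'.measurable

variable {ρ : E → ℝ} {μ : Measure E}

theorem mul_setIntegral_ball_le_integral_kernel_mul (hKm : Measurable K) (hK0 : ∀ x, 0 ≤ K x)
    (hKM : ∀ x, K x ≤ M) (hKκ : ∀ x, ‖x‖ < r → κ ≤ K x) (hρ0 : 0 ≤ ρ) (hρ : Integrable ρ μ)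
    {b x : E} (hx : x ∈ ball b (r / 2)) :
    κ * ∫ y in ball b (r / 2), ρ y ∂μ ≤ ∫ y, K (x - y) * ρ y ∂μ := by
  have hint := integrable_kernel_mul hKm hK0 hKM measurable_id hρ x
  calc κ * ∫ y in ball b (r / 2), ρ y ∂μ = ∫ y in ball b (r / 2), κ * ρ y ∂μ :=
        (integral_const_mul _ _).symm
    _ ≤ ∫ y in ball b (r / 2), K (x - y) * ρ y ∂μ := by
        refine setIntegral_mono_on (hρ.const_mul κ).integrableOn hint.integrableOn
          measurableSet_ball fun y hy => mul_le_mul_of_nonneg_right (hKκ _ ?_) (hρ0 y)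
        rw [← dist_eq_norm]
        linarith [dist_triangle_right x y b, mem_ball.1 hx, mem_ball.1 hy]
    _ ≤ ∫ y, K (x - y) * ρ y ∂μ :=
        setIntegral_le_integral hint
          (Filter.Eventually.of_forall fun y => mul_nonneg (hK0 _) (hρ0 y))

theorem setLIntegral_ball_div_integral_kernel_mul_le
    (hKm : Measurable K) (hK0 : ∀ x, 0 ≤ K x) (hKM : ∀ x, K x ≤ M) (hκ : 0 < κ)
    (hKκ : ∀ x, ‖x‖ < r → κ ≤ K x) (hρm : Measurable ρ) (hρ0 : 0 ≤ ρ) (hρ : Integrable ρ μ)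
    (b : E) :
    ∫⁻ x in ball b (r / 2), ENNReal.ofReal (ρ x / ∫ y, K (x - y) * ρ y ∂μ) ∂μ ≤
      ENNReal.ofReal κ⁻¹ := by
  set A := ∫ y in ball b (r / 2), ρ y ∂μ with hAdef
  rcases (show 0 ≤ A from setIntegral_nonneg measurableSet_ball fun x _ => hρ0 x).eq_or_lt
    with hA | hA
  · have hρB : ρ =ᵐ[μ.restrict (ball b (r / 2))] 0 :=
      (setIntegral_eq_zero_iff_of_nonneg_ae (Filter.Eventually.of_forall hρ0) hρ.integrableOn).1
        hA.symm
    calc _ = ∫⁻ _ in ball b (r / 2), 0 ∂μ := lintegral_congr_ae (hρB.mono fun x hx => by simp [hx])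
      _ ≤ _ := by simp
  calc ∫⁻ x in ball b (r / 2), ENNReal.ofReal (ρ x / ∫ y, K (x - y) * ρ y ∂μ) ∂μ
      ≤ ∫⁻ x in ball b (r / 2), ENNReal.ofReal (ρ x / (κ * A)) ∂μ :=
        setLIntegral_mono (hρm.div_const _).ennreal_ofReal fun x hx =>
          ENNReal.ofReal_le_ofReal (div_le_div_of_nonneg_left (hρ0 x) (mul_pos hκ hA)
            (mul_setIntegral_ball_le_integral_kernel_mul hKm hK0 hKM hKκ hρ0 hρ hx))
    _ = ENNReal.ofReal (∫ x in ball b (r / 2), ρ x / (κ * A) ∂μ) :=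
        (ofReal_integral_eq_lintegral_ofReal (hρ.integrableOn.div_const _)
          (Filter.Eventually.of_forall fun x => div_nonneg (hρ0 x) (mul_pos hκ hA).le)).symm
    _ = ENNReal.ofReal κ⁻¹ := by
        rw [integral_div, ← hAdef, div_mul_cancel_right₀ hA.ne']

theorem exists_lintegral_kernel_mul_div_integral_kernel_mul_le [SecondCountableTopology E]
    [SFinite μ] (hKm : Measurable K) (hK0 : ∀ x, 0 ≤ K x) (hKM : ∀ x, K x ≤ M)
    (hKsupp : HasCompactSupport K) (hr : 0 < r) (hκ : 0 < κ) (hKκ : ∀ x, ‖x‖ < r → κ ≤ K x) :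
    ∃ C, 0 < C ∧ ∀ ρ : E → ℝ, Measurable ρ → 0 ≤ ρ → Integrable ρ μ → ∀ y,
      ∫⁻ x, ENNReal.ofReal (K (x - y)) *
        ENNReal.ofReal (ρ x / ∫ x', K (x - x') * ρ x' ∂μ) ∂μ ≤ ENNReal.ofReal C := by
  obtain ⟨s, hs⟩ := exists_finset_ofReal_kernel_mul_le_sum_indicator hKM hKsupp hr
  have hM : 0 ≤ M := (hK0 0).trans (hKM 0)
  refine ⟨s.card * M / κ + 1, by positivity, fun ρ hρm hρ0 hρ y => ?_⟩
  have hg : Measurable fun x => ENNReal.ofReal (ρ x / ∫ x', K (x - x') * ρ x' ∂μ) :=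
    (hρm.div (measurable_integral_kernel_mul hKm hρm)).ennreal_ofReal
  calc ∫⁻ x, ENNReal.ofReal (K (x - y)) * ENNReal.ofReal (ρ x / ∫ x', K (x - x') * ρ x' ∂μ) ∂μ
      ≤ ∫⁻ x, ∑ c ∈ s, (ball (y + c) (r / 2)).indicator (fun x => ENNReal.ofReal M *
          ENNReal.ofReal (ρ x / ∫ x', K (x - x') * ρ x' ∂μ)) x ∂μ :=
        lintegral_mono fun x => hs _ x y
    _ = ∑ c ∈ s, ENNReal.ofReal M * ∫⁻ x in ball (y + c) (r / 2),
          ENNReal.ofReal (ρ x / ∫ x', K (x - x') * ρ x' ∂μ) ∂μ := by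
        rw [lintegral_finsetSum _ fun c _ => (hg.const_mul _).indicator measurableSet_ball]
        simp_rw [lintegral_indicator measurableSet_ball, lintegral_const_mul _ hg]
    _ ≤ ∑ c ∈ s, ENNReal.ofReal M * ENNReal.ofReal κ⁻¹ :=
        Finset.sum_le_sum fun c _ => by
          gcongr
          exact setLIntegral_ball_div_integral_kernel_mul_le hKm hK0 hKM hκ hKκ hρm hρ0 hρ _
    _ = ENNReal.ofReal (s.card * M / κ) := by
        rw [Finset.sum_const, nsmul_eq_mul, ← ENNReal.ofReal_mul hM, ← ENNReal.ofReal_natCast,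
          ← ENNReal.ofReal_mul (Nat.cast_nonneg _), mul_div_assoc, div_eq_mul_inv]
    _ ≤ ENNReal.ofReal (s.card * M / κ + 1) :=
        ENNReal.ofReal_le_ofReal (le_add_of_nonneg_right zero_le_one)

end Kernel

section AlignmentEnergy

variable {E V : Type*} [NormedAddCommGroup E] [MeasurableSpace E] [BorelSpace E]
  [SecondCountableTopology E] [NormedAddCommGroup V] [NormedSpace ℝ V] [MeasurableSpace V]
  [OpensMeasurableSpace V] [SecondCountableTopology V] {μ : Measure E} {ν : Measure V}
  [SFinite μ] [SFinite ν] {K : E → ℝ} {M : ℝ}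

theorem integral_density_mul_norm_inv_smul_sq_le (hKm : Measurable K) (hK0 : ∀ x, 0 ≤ K x)
    (hKM : ∀ x, K x ≤ M) {f : E × V → ℝ} (hfm : Measurable f) (hf0 : ∀ z, 0 ≤ f z)
    (hf : Integrable f (μ.prod ν)) (hfkin : Integrable (fun z => ‖z.2‖ ^ 2 * f z) (μ.prod ν))
    {C : ℝ} (hC0 : 0 ≤ C)
    (hC : ∀ ρ : E → ℝ, Measurable ρ → 0 ≤ ρ → Integrable ρ μ → ∀ y,
      ∫⁻ x, ENNReal.ofReal (K (x - y)) *
        ENNReal.ofReal (ρ x / ∫ x', K (x - x') * ρ x' ∂μ) ∂μ ≤ ENNReal.ofReal C) :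
    ∫ x, (∫ v, f (x, v) ∂ν) * ‖(∫ z, K (x - z.1) * f z ∂μ.prod ν)⁻¹ •
        ∫ z, (K (x - z.1) * f z) • z.2 ∂μ.prod ν‖ ^ 2 ∂μ ≤
      C * ∫ z, ‖z.2‖ ^ 2 * f z ∂μ.prod ν := by
  set ρ : E → ℝ := fun x => ∫ v, f (x, v) ∂ν
  set ρK : E → ℝ := fun x => ∫ y, K (x - y) * ρ y ∂μ
  set J : E → ℝ := fun x => ∫ z, K (x - z.1) * f z * ‖z.2‖ ^ 2 ∂μ.prod ν
  have hρm : Measurable ρ := hfm.stronglyMeasurable.integral_prod_right'.measurable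
  have hρ0 : 0 ≤ ρ := fun x => integral_nonneg fun v => hf0 _
  have hg0 : ∀ x, 0 ≤ fun z : E × V => K (x - z.1) * f z := fun x z => mul_nonneg (hK0 _) (hf0 z)
  have hg := integrable_kernel_mul hKm hK0 hKM measurable_fst hf
  have hconv : ∀ x, ∫ z, K (x - z.1) * f z ∂μ.prod ν = ρK x := fun x => by
    rw [integral_prod _ (hg x)]
    simp_rw [integral_const_mul]
    rfl
  have hpoint : ∀ x, ρ x * ‖(ρK x)⁻¹ • ∫ z, (K (x - z.1) * f z) • z.2 ∂μ.prod ν‖ ^ 2 ≤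
      ρ x / ρK x * J x := fun x => by
    refine mul_norm_inv_smul_sq_le (hρ0 x) (hconv x ▸ integral_nonneg (hg0 x)) ?_
    rw [← hconv x]
    exact norm_integral_smul_sq_le (hg0 x) (hg x) measurable_snd.aestronglyMeasurable
      ((integrable_kernel_mul hKm hK0 hKM measurable_fst hfkin x).congr
        (ae_of_all _ fun z => by ring))
  have hρK0 : 0 ≤ ρK := fun x => hconv x ▸ integral_nonneg (hg0 x)
  have hkin0 : 0 ≤ fun z : E × V => ‖z.2‖ ^ 2 * f z := fun z => mul_nonneg (sq_nonneg _) (hf0 z)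
  simp only [hconv]
  rw [← ENNReal.ofReal_le_ofReal_iff (mul_nonneg hC0 (integral_nonneg hkin0))]
  calc ENNReal.ofReal (∫ x, ρ x * ‖(ρK x)⁻¹ • ∫ z, (K (x - z.1) * f z) • z.2 ∂μ.prod ν‖ ^ 2 ∂μ)
      ≤ ∫⁻ x, ENNReal.ofReal (ρ x / ρK x) * ENNReal.ofReal (J x) ∂μ := by
        refine (ofReal_integral_le_lintegral_ofReal fun x => ?_).trans (lintegral_mono fun x => ?_)
        · exact mul_nonneg (hρ0 x) (sq_nonneg _)
        · rw [← ENNReal.ofReal_mul (div_nonneg (hρ0 x) (hρK0 x))]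
          exact ENNReal.ofReal_le_ofReal (hpoint x)
    _ ≤ ∫⁻ x, ENNReal.ofReal (ρ x / ρK x) *
          ∫⁻ z, ENNReal.ofReal (K (x - z.1)) * ENNReal.ofReal (‖z.2‖ ^ 2 * f z) ∂μ.prod ν ∂μ := by
        refine lintegral_mono fun x => ?_
        gcongr
        refine (ofReal_integral_le_lintegral_ofReal fun z => ?_).trans_eq
          (lintegral_congr fun z => ?_)
        · exact mul_nonneg (hg0 x z) (sq_nonneg _)
        · rw [← ENNReal.ofReal_mul (hK0 _), mul_assoc, mul_comm (f z)]
    _ ≤ ENNReal.ofReal C * ∫⁻ z, ENNReal.ofReal (‖z.2‖ ^ 2 * f z) ∂μ.prod ν :=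
        lintegral_mul_lintegral_le_of_lintegral_kernel_le
          (hKm.comp (measurable_fst.sub (measurable_fst.comp measurable_snd))).ennreal_ofReal
          (hρm.div (measurable_integral_kernel_mul hKm hρm)).ennreal_ofReal
          ((measurable_snd.norm.pow_const 2).mul hfm).ennreal_ofReal
          fun z => hC ρ hρm hρ0 hf.integral_prod_left z.1
    _ = ENNReal.ofReal (C * ∫ z, ‖z.2‖ ^ 2 * f z ∂μ.prod ν) := by
        rw [ENNReal.ofReal_mul hC0, ofReal_integral_eq_lintegral_ofReal hfkin (ae_of_all _ hkin0)]

end AlignmentEnergy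

theorem alignment_energy_bound_general
    (d : ℕ)
    (K : EuclideanSpace ℝ (Fin d) → ℝ)
    (hKcont : Continuous K) (hKnonneg : ∀ x, 0 ≤ K x)
    (R₁ R₂ : ℝ) (hR₁ : 0 < R₁)
    (hKpos : ∀ x, ‖x‖ ≤ R₁ → 0 < K x)
    (hKzero : ∀ x, R₂ ≤ ‖x‖ → K x = 0) :
    ∃ C : ℝ, 0 < C ∧
      ∀ f : EuclideanSpace ℝ (Fin d) × EuclideanSpace ℝ (Fin d) → ℝ,
        Measurable f → (∀ z, 0 ≤ f z) → Integrable f →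
        Integrable (fun z => ‖z.2‖ ^ 2 * f z) →
        (∫ x, (∫ v, f (x, v)) *
            ‖((∫ z : EuclideanSpace ℝ (Fin d) × EuclideanSpace ℝ (Fin d),
                K (x - z.1) * f z)⁻¹ : ℝ) •
              (∫ z : EuclideanSpace ℝ (Fin d) × EuclideanSpace ℝ (Fin d),
                (K (x - z.1) * f z) • z.2)‖ ^ 2) ≤
          C * ∫ z : EuclideanSpace ℝ (Fin d) × EuclideanSpace ℝ (Fin d),
                ‖z.2‖ ^ 2 * f z := by
  have hKsupp : HasCompactSupport K := .intro (isCompact_closedBall 0 R₂) fun x hx =>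
    hKzero x (not_le.1 (mt mem_closedBall_zero_iff.2 hx)).le
  obtain ⟨M, hM⟩ := hKcont.bounded_above_of_compact_support hKsupp
  have hKM : ∀ x, K x ≤ M := fun x => (Real.le_norm_self _).trans (hM x)
  obtain ⟨x₀, hx₀, hKmin⟩ := (isCompact_closedBall (0 : EuclideanSpace ℝ (Fin d)) R₁).exists_isMinOn
    (nonempty_closedBall.2 hR₁.le) hKcont.continuousOn
  obtain ⟨C, hC, hnorm⟩ := exists_lintegral_kernel_mul_div_integral_kernel_mul_le (μ := volume)
    hKcont.measurable hKnonneg hKM hKsupp hR₁ (hKpos x₀ (mem_closedBall_zero_iff.1 hx₀))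
    fun x hx => hKmin (mem_closedBall_zero_iff.2 hx.le)
  exact ⟨C, hC, fun f hfm hf0 hf hfkin => integral_density_mul_norm_inv_smul_sq_le
    hKcont.measurable hKnonneg hKM hfm hf0 hf hfkin hC.le hnorm⟩

/-- Control of the local alignment energy `∫ ρ ũ² dx` by the kinetic energy,
with a constant coming from the kernel normalization lemma. -/
theorem alignment_energy_bound
    (d : ℕ) (hd : 0 < d)
    (K : EuclideanSpace ℝ (Fin d) → ℝ)
    (hKcont : Continuous K) (hKnonneg : ∀ x, 0 ≤ K x)
    (R₁ R₂ : ℝ) (hR₁ : 0 < R₁) (hR₁₂ : R₁ < R₂)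
    (hKpos : ∀ x, ‖x‖ ≤ R₁ → 0 < K x)
    (hKzero : ∀ x, R₂ ≤ ‖x‖ → K x = 0) :
    ∃ C : ℝ, 0 < C ∧
      ∀ f : EuclideanSpace ℝ (Fin d) × EuclideanSpace ℝ (Fin d) → ℝ,
        Measurable f → (∀ z, 0 ≤ f z) → Integrable f →
        Integrable (fun z => ‖z.2‖ ^ 2 * f z) →
        (∫ x, (∫ v, f (x, v)) *
            ‖((∫ z : EuclideanSpace ℝ (Fin d) × EuclideanSpace ℝ (Fin d),
                K (x - z.1) * f z)⁻¹ : ℝ) •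
              (∫ z : EuclideanSpace ℝ (Fin d) × EuclideanSpace ℝ (Fin d),
                (K (x - z.1) * f z) • z.2)‖ ^ 2) ≤
          C * ∫ z : EuclideanSpace ℝ (Fin d) × EuclideanSpace ℝ (Fin d),
                ‖z.2‖ ^ 2 * f z :=
  alignment_energy_bound_general d K hKcont hKnonneg R₁ R₂ hR₁ hKpos hKzero
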